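/- Let f : Aⁿ → B be determined by ofo, say f = f* ∘ ofo restricted to Aⁿ. Then for every 2-element subset I of {1,…,n}, the identification minor f_I equals f* ∘ ofo restricted to A^{n-1}; in particular all identification minors of f are equal. -/

import Mathlib

/-- `ofo` maps a string to the subsequence retaining only the first occurrence of each symbol. -/
def ofo {A : Type*} [DecidableEq A] : List A → List A
  | [] => []
  | a :: l => a :: ofo (l.filter (· ≠ a))
termination_by l => l.length
decreasing_by
  simp only [List.length_cons]
  exact Nat.lt_succ_of_le ((List.length_unattach ..).le.trans ((List.length_filter_le _ _).trans (List.length_attach ..).le))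

/-- For `I = {i, j}` with `i < j` (0-indexed, in `Fin (n+1)`), the map
`δ_I : Fin (n+1) → Fin n`: `m ↦ m` for `m < j`, `j ↦ i`, `m ↦ m - 1` for `m > j`. -/
def deltaMap {n : ℕ} (i j : Fin (n+1)) (hij : (i:ℕ) < j) : Fin (n+1) → Fin n :=
  fun m =>
    if _ : (m:ℕ) < j then ⟨m, by have := j.isLt; omega⟩
    else if _ : (m:ℕ) = j then ⟨i, by have := j.isLt; omega⟩
    else ⟨(m:ℕ) - 1, by have := m.isLt; omega⟩

/-! `a ∘ δ_I` is the word `a` with a second copy of its letter `a i` inserted at position `j > i`,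
and `ofo` ignores every occurrence of a letter after its first. -/

theorem ofo_append_cons_of_mem {A : Type*} [DecidableEq A] :
    ∀ {l₁ : List A} {x : A}, x ∈ l₁ → ∀ l₂, ofo (l₁ ++ x :: l₂) = ofo (l₁ ++ l₂)
  | a :: t, x, hx, l₂ => by
    simp only [List.cons_append, ofo, List.filter_append]
    by_cases hxa : x = a
    · simp [hxa]
    · have hxt : x ∈ t.filter (· ≠ a) := by grind
      simp only [List.filter_cons, ne_eq, hxa, not_false_eq_true, decide_true, if_true]
      rw [ofo_append_cons_of_mem hxt]
termination_by l₁ => l₁.length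
decreasing_by exact Nat.lt_succ_of_le (List.length_filter_le _ _)

theorem ofFn_comp_deltaMap {A : Type*} {n : ℕ} (i j : Fin (n+1)) (hij : (i:ℕ) < j)
    (a : Fin n → A) :
    List.ofFn (a ∘ deltaMap i j hij) =
      (List.ofFn a).take j ++ a ⟨i, by omega⟩ :: (List.ofFn a).drop j := by
  apply List.ext_getElem
  · grind [List.length_ofFn]
  · intro m h₁ h₂
    simp only [List.length_ofFn] at h₁
    simp only [List.getElem_ofFn, Function.comp_apply, deltaMap]
    split_ifs <;> grind

/-- if `f : A^{n+1} → B` is determined by ofo via `f*`, then every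
identification minor `f_I` equals `f* ∘ ofo` on `Aⁿ`; in particular all identification
minors of `f` are equal. -/
theorem stmt13 {A B : Type*} [DecidableEq A] {n : ℕ} (f : (Fin (n+1) → A) → B)
    (fstar : List A → B)
    (hf : ∀ a : Fin (n+1) → A, f a = fstar (ofo (List.ofFn a))) :
    ∀ (i j : Fin (n+1)) (hij : (i:ℕ) < j) (a : Fin n → A),
      f (a ∘ deltaMap i j hij) = fstar (ofo (List.ofFn a)) := by
  intro i j hij a
  have hmem : a ⟨i, by omega⟩ ∈ (List.ofFn a).take j :=
    List.mem_iff_getElem.mpr ⟨i, by grind [List.length_ofFn], by simp⟩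
  rw [hf, ofFn_comp_deltaMap, ofo_append_cons_of_mem hmem, List.take_append_drop]
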